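/- Let q be prime and let φ: ℤ_q^m → ℤ_q be a GPqA(q^m) of type 1 = (1,…,1). Then the expansion φ': ℤ_{q²}^m → ℤ_q of φ of type 1 is a 2m-generalized plateaued function: for every v ∈ ℤ_{q²}^m, |Σ_{x ∈ ℤ_{q²}^m} ζ_q^{φ'(x)} ζ_{q²}^{−v·x}|² ∈ {0, q^{3m}}, with the value q^{3m} attained exactly when v ≡ (1,…,1) mod q. -/

import Mathlib

open scoped BigOperators

noncomputable section

/-- `zeta k` is the complex `k`-th root of unity `exp(2π√-1/k)`. -/
def zeta (k : ℕ) : ℂ := Complex.exp (2 * Real.pi * Complex.I / k)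

/-- Periodic autocorrelation of a map `f : A → ℤ_q` at shift `w`. -/
def AC {A : Type*} [AddCommGroup A] [Fintype A] (q : ℕ) (f : A → ZMod q) (w : A) : ℂ :=
  ∑ g : A, zeta q ^ (f g - f (g + w)).val

/-- The expansion `φ' : ℤ_{q²}^m → ℤ_q` of type `1 = (1,…,1)` of `φ : ℤ_q^m → ℤ_q`:
`φ'(g) = φ(g mod q) + Σ_i ⌊g_i/q⌋ (mod q)`. -/
def expandOne (q m : ℕ) (φ : (Fin m → ZMod q) → ZMod q)
    (g : Fin m → ZMod (q ^ 2)) : ZMod q :=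
  φ (fun i => ((g i).val : ZMod q)) + ((∑ i, (g i).val / q : ℕ) : ZMod q)

/-- `L = {(y_1 q, …, y_m q) : 0 ≤ y_i < q} ⊆ ℤ_{q²}^m`. -/
def LOne (q m : ℕ) : Set (Fin m → ZMod (q ^ 2)) :=
  {g | ∀ i, q ∣ (g i).val}

/-- The "Walsh" sum `Σ_{x ∈ ℤ_{q²}^m} ζ_q^{φ'(x)} ζ_{q²}^{-v·x}`. -/
def WS (q m : ℕ) [NeZero (q ^ 2)] (f : (Fin m → ZMod (q ^ 2)) → ZMod q)
    (v : Fin m → ZMod (q ^ 2)) : ℂ :=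
  ∑ x : Fin m → ZMod (q ^ 2),
    zeta q ^ (f x).val * zeta (q ^ 2) ^ (-(∑ i, (v i).val * (x i).val : ℤ))

/-!
Write `ψ_N` for the standard additive character of `ℤ_N`. Expanding the square gives
`|W(v)|² = Σ_w ψ_{q²}(v·w) AC(w)`. The GPqA hypothesis kills every shift outside
`L = q ℤ_{q²}^m`, and adding `q y` to `g` leaves the low digits of `g` unchanged while adding
`y` to the high digits, so `φ'(g + q y) = φ'(g) + Σ y_i` and `AC(q y) = q^{2m} ψ_q(-Σ y_i)`.
Hence `|W(v)|² = q^{2m} Σ_{y ∈ ℤ_q^m} ψ_q(Σ y_i (v_i mod q - 1))`, and this character sum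
factors as a product of `m` sums over `ℤ_q`, each equal to `q` or `0`.
-/

open Finset ZMod ComplexConjugate

lemma zeta_zpow_eq_stdAddChar (N : ℕ) [NeZero N] (k : ℤ) :
    zeta N ^ k = stdAddChar (k : ZMod N) := by
  rw [stdAddChar_coe, zeta, ← Complex.exp_int_mul]
  ring_nf

lemma zeta_pow_val_eq_stdAddChar (N : ℕ) [NeZero N] (a : ZMod N) :
    zeta N ^ a.val = stdAddChar a := by
  rw [← zpow_natCast, zeta_zpow_eq_stdAddChar, Int.cast_natCast, natCast_zmod_val]

lemma stdAddChar_sq_natCast_mul (q : ℕ) [NeZero q] (j : ℕ) :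
    stdAddChar ((q * j : ℕ) : ZMod (q ^ 2)) = stdAddChar (j : ZMod q) := by
  have hq : (q : ℂ) ≠ 0 := Nat.cast_ne_zero.mpr (NeZero.ne q)
  rw [stdAddChar_apply, stdAddChar_apply, toCircle_natCast, toCircle_natCast]
  congr 1
  push_cast
  field_simp

lemma AddChar.map_sum_eq_prod {ι A M : Type*} [AddCommMonoid A] [CommMonoid M]
    (ψ : AddChar A M) (s : Finset ι) (f : ι → A) : ψ (∑ i ∈ s, f i) = ∏ i ∈ s, ψ (f i) := by
  classical
  induction s using Finset.induction_on with
  | empty => simp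
  | insert i s hi ih => rw [sum_insert hi, prod_insert hi, ψ.map_add_eq_mul, ih]

lemma sum_stdAddChar_dotProduct {N m : ℕ} [NeZero N] (c : Fin m → ZMod N) :
    ∑ y : Fin m → ZMod N, stdAddChar (y ⬝ᵥ c) = ∏ i, if c i = 0 then (N : ℂ) else 0 := by
  classical
  simp only [dotProduct, AddChar.map_sum_eq_prod]
  refine (Fintype.prod_sum fun i (t : ZMod N) => stdAddChar (t * c i)).symm.trans ?_
  refine Finset.prod_congr rfl fun i _ => ?_
  rw [AddChar.sum_mulShift _ (isPrimitive_stdAddChar N), ZMod.card, Nat.cast_ite, Nat.cast_zero]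

lemma mul_conj_sum_mul_addChar {G : Type*} [AddCommGroup G] [Fintype G]
    (F : G → ℂ) (ρ : AddChar G ℂ) :
    (∑ x, F x * ρ x) * conj (∑ x, F x * ρ x) =
      ∑ w, ρ (-w) * ∑ g, F g * conj (F (g + w)) := by
  rw [map_sum, Finset.sum_mul_sum]
  simp only [Finset.mul_sum]
  rw [Finset.sum_comm (γ := G) (s := univ) (t := univ)
    (f := fun w g => ρ (-w) * (F g * conj (F (g + w))))]
  refine Finset.sum_congr rfl fun g _ => ?_
  refine (Fintype.sum_equiv (Equiv.addLeft g) _ _ fun w => ?_).symm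
  have hρ : ρ g * ρ (-g) = 1 := by rw [← ρ.map_add_eq_mul, add_neg_cancel, ρ.map_zero_eq_one]
  simp only [Equiv.coe_addLeft, map_mul, ← AddChar.map_neg_eq_conj, ρ.map_add_eq_mul]
  linear_combination -F g * conj (F (g + w)) * ρ (-w) * hρ

lemma natCast_val_add_natCast_mul (q c : ℕ) [NeZero q] (g : ZMod (q ^ 2)) :
    (((g + ((q * c : ℕ) : ZMod (q ^ 2))).val : ℕ) : ZMod q) = (g.val : ZMod q) := by
  have hdvd : q ∣ q ^ 2 := dvd_pow_self q two_ne_zero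
  rw [← cast_eq_val, ← cast_eq_val, cast_add hdvd, cast_natCast hdvd, Nat.cast_mul,
    natCast_self, zero_mul, add_zero]

lemma natCast_val_div_add_natCast_mul (q c : ℕ) [NeZero q] (g : ZMod (q ^ 2)) :
    (((g + ((q * c : ℕ) : ZMod (q ^ 2))).val / q : ℕ) : ZMod q) =
      ((g.val / q : ℕ) : ZMod q) + c := by
  have hdigit (n : ℕ) : n % q ^ 2 / q = n / q % q := by
    rw [sq, Nat.mod_mul_right_div_self]
  rw [val_add, val_natCast, Nat.add_mod_mod, hdigit, natCast_mod,
    Nat.add_mul_div_left _ _ (NeZero.pos q), Nat.cast_add]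

/-- `y ↦ q y`, a bijection from `ℤ_q^m` onto `L = LOne q m`. -/
def scaleByQ (q m : ℕ) (y : Fin m → ZMod q) : Fin m → ZMod (q ^ 2) :=
  fun i => ((q * (y i).val : ℕ) : ZMod (q ^ 2))

lemma val_scaleByQ (q m : ℕ) [NeZero q] (y : Fin m → ZMod q) (i : Fin m) :
    (scaleByQ q m y i).val = q * (y i).val := by
  refine val_cast_of_lt ?_
  rw [sq]
  exact Nat.mul_lt_mul_of_pos_left (val_lt (y i)) (NeZero.pos q)

lemma scaleByQ_injective (q m : ℕ) [NeZero q] : Function.Injective (scaleByQ q m) := by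
  intro y y' h
  funext i
  have := congrArg (fun x => (x i).val) h
  simp only [val_scaleByQ] at this
  exact val_injective q (Nat.eq_of_mul_eq_mul_left (NeZero.pos q) this)

lemma mem_range_scaleByQ_of_mem_LOne (q m : ℕ) [NeZero q] {w : Fin m → ZMod (q ^ 2)}
    (hw : w ∈ LOne q m) : w ∈ Set.range (scaleByQ q m) := by
  refine ⟨fun i => ((w i).val / q : ℕ), funext fun i => ?_⟩
  have hlt : (w i).val / q < q :=
    Nat.div_lt_of_lt_mul (by simpa [sq] using val_lt (w i))
  rw [scaleByQ, val_cast_of_lt hlt, Nat.mul_div_cancel' (hw i), natCast_zmod_val]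

lemma expandOne_add_scaleByQ (q m : ℕ) [NeZero q] (φ : (Fin m → ZMod q) → ZMod q)
    (g : Fin m → ZMod (q ^ 2)) (y : Fin m → ZMod q) :
    expandOne q m φ (g + scaleByQ q m y) = expandOne q m φ g + ∑ i, y i := by
  simp only [expandOne, Pi.add_apply, scaleByQ, natCast_val_add_natCast_mul, Nat.cast_sum,
    natCast_val_div_add_natCast_mul, natCast_zmod_val, sum_add_distrib]
  ring

def dotProductChar {ι R M : Type*} [Fintype ι] [CommRing R] [CommMonoid M]
    (ψ : AddChar R M) (v : ι → R) : AddChar (ι → R) M :=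
  ψ.compAddMonoidHom (dotProductBilin R R v).toAddMonoidHom

lemma dotProductChar_apply {ι R M : Type*} [Fintype ι] [CommRing R] [CommMonoid M]
    (ψ : AddChar R M) (v x : ι → R) : dotProductChar ψ v x = ψ (v ⬝ᵥ x) := rfl

lemma WS_eq_sum_mul_dotProductChar (q m : ℕ) [NeZero q] (f : (Fin m → ZMod (q ^ 2)) → ZMod q)
    (v : Fin m → ZMod (q ^ 2)) :
    WS q m f v = ∑ x, stdAddChar (f x) * dotProductChar stdAddChar (-v) x := by
  refine Finset.sum_congr rfl fun x _ => ?_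
  rw [zeta_pow_val_eq_stdAddChar, zeta_zpow_eq_stdAddChar, dotProductChar_apply]
  push_cast [natCast_zmod_val, dotProduct]
  simp only [Pi.neg_apply, neg_mul, sum_neg_distrib]

lemma AC_eq_sum_mul_conj (q : ℕ) [NeZero q] {A : Type*} [AddCommGroup A] [Fintype A]
    (f : A → ZMod q) (w : A) :
    AC q f w = ∑ g, stdAddChar (f g) * conj (stdAddChar (f (g + w))) := by
  simp only [AC, zeta_pow_val_eq_stdAddChar, ← AddChar.map_neg_eq_conj, ← AddChar.map_add_eq_mul,
    sub_eq_add_neg]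

lemma AC_expandOne_scaleByQ (q m : ℕ) [NeZero q] (φ : (Fin m → ZMod q) → ZMod q)
    (y : Fin m → ZMod q) :
    AC q (expandOne q m φ) (scaleByQ q m y) = (q : ℂ) ^ (2 * m) * stdAddChar (-∑ i, y i) := by
  simp only [AC, expandOne_add_scaleByQ, sub_add_cancel_left, zeta_pow_val_eq_stdAddChar,
    sum_const, card_univ, Fintype.card_fun, ZMod.card, Fintype.card_fin, nsmul_eq_mul]
  push_cast
  ring

lemma dotProductChar_neg_scaleByQ (q m : ℕ) [NeZero q] (v : Fin m → ZMod (q ^ 2))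
    (y : Fin m → ZMod q) :
    dotProductChar stdAddChar (-v) (-scaleByQ q m y) =
      stdAddChar (∑ i, y i * ((v i).val : ZMod q)) := by
  have hdot : v ⬝ᵥ scaleByQ q m y = ((q * ∑ i, (y i).val * (v i).val : ℕ) : ZMod (q ^ 2)) := by
    push_cast [dotProduct, scaleByQ, mul_sum, natCast_zmod_val]
    exact Finset.sum_congr rfl fun i _ => by ring
  rw [dotProductChar_apply, neg_dotProduct_neg, hdot, stdAddChar_sq_natCast_mul]
  simp only [Nat.cast_sum, Nat.cast_mul, natCast_zmod_val]

lemma norm_WS_expandOne_sq (q m : ℕ) [NeZero q] (φ : (Fin m → ZMod q) → ZMod q)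
    (hGP : ∀ g : Fin m → ZMod (q ^ 2), g ∉ LOne q m → AC q (expandOne q m φ) g = 0)
    (v : Fin m → ZMod (q ^ 2)) :
    (‖WS q m (expandOne q m φ) v‖ : ℂ) ^ 2 =
      (q : ℂ) ^ (2 * m) * ∏ i, if ((v i).val : ZMod q) - 1 = 0 then (q : ℂ) else 0 := by
  rw [← Complex.mul_conj', WS_eq_sum_mul_dotProductChar, mul_conj_sum_mul_addChar]
  simp only [← AC_eq_sum_mul_conj]
  rw [← Fintype.sum_of_injective (scaleByQ q m) (scaleByQ_injective q m) _ _
    (fun w hw => by rw [hGP w (mt (mem_range_scaleByQ_of_mem_LOne q m) hw), mul_zero])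
    (fun y => rfl)]
  simp only [dotProductChar_neg_scaleByQ, AC_expandOne_scaleByQ]
  rw [← sum_stdAddChar_dotProduct, mul_sum]
  refine Finset.sum_congr rfl fun y _ => ?_
  rw [mul_left_comm, ← AddChar.map_add_eq_mul, ← sub_eq_add_neg]
  simp only [dotProduct, mul_sub, mul_one, sum_sub_distrib]

theorem expansion_is_generalized_plateaued_general
    (q m : ℕ) [NeZero q] [NeZero (q ^ 2)]
    (φ : (Fin m → ZMod q) → ZMod q)
    (hGP : ∀ g : Fin m → ZMod (q ^ 2), g ∉ LOne q m → AC q (expandOne q m φ) g = 0) :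
    ∀ v : Fin m → ZMod (q ^ 2),
      ((∀ i, (((v i).val : ℕ) : ZMod q) = 1) →
        ‖WS q m (expandOne q m φ) v‖ ^ 2 = (q : ℝ) ^ (3 * m))
      ∧ ((¬ ∀ i, (((v i).val : ℕ) : ZMod q) = 1) →
        ‖WS q m (expandOne q m φ) v‖ ^ 2 = 0) := by
  intro v
  have hnorm := norm_WS_expandOne_sq q m φ hGP v
  refine ⟨fun hone => ?_, fun hnone => ?_⟩
  · have hprod : ∏ i, (if ((v i).val : ZMod q) - 1 = 0 then (q : ℂ) else 0) = (q : ℂ) ^ m := by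
      simp [hone]
    have hsq : (‖WS q m (expandOne q m φ) v‖ : ℂ) ^ 2 = (((q : ℝ) ^ (3 * m) : ℝ) : ℂ) := by
      rw [hnorm, hprod]
      push_cast
      ring
    exact_mod_cast hsq
  · obtain ⟨j, hj⟩ := not_forall.mp hnone
    have hprod : ∏ i, (if ((v i).val : ZMod q) - 1 = 0 then (q : ℂ) else 0) = 0 :=
      prod_eq_zero (mem_univ j) (if_neg (sub_ne_zero.mpr hj))
    have hsq : (‖WS q m (expandOne q m φ) v‖ : ℂ) ^ 2 = ((0 : ℝ) : ℂ) := by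
      rw [hnorm, hprod, mul_zero, Complex.ofReal_zero]
    exact_mod_cast hsq

/-- for `q` prime, if `φ : ℤ_q^m → ℤ_q` is a `GPqA(q^m)` of type `1`,
then the expansion `φ' : ℤ_{q²}^m → ℤ_q` is a `2m`-generalized plateaued function:
`|Σ_x ζ_q^{φ'(x)} ζ_{q²}^{-v·x}|² ∈ {0, q^{3m}}`, with the value `q^{3m}` attained
exactly when `v ≡ (1,…,1) (mod q)`. -/
theorem expansion_is_generalized_plateaued
    (q m : ℕ) [NeZero q] [NeZero (q ^ 2)] (hq : Nat.Prime q)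
    (φ : (Fin m → ZMod q) → ZMod q)
    (hGP : ∀ g : Fin m → ZMod (q ^ 2), g ∉ LOne q m → AC q (expandOne q m φ) g = 0) :
    ∀ v : Fin m → ZMod (q ^ 2),
      ((∀ i, (((v i).val : ℕ) : ZMod q) = 1) →
        ‖WS q m (expandOne q m φ) v‖ ^ 2 = (q : ℝ) ^ (3 * m))
      ∧ ((¬ ∀ i, (((v i).val : ℕ) : ZMod q) = 1) →
        ‖WS q m (expandOne q m φ) v‖ ^ 2 = 0) :=
  expansion_is_generalized_plateaued_general q m φ hGP

end
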